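/- The unitary Cayley graph of ℤ/4ℤ (the 4-cycle) does not have quantum fractional revival from vertex 0 to vertex 1 at any time t ∈ ℝ. -/

import Mathlib

/-!
Negation `x ↦ -x` is an automorphism of every unitary Cayley graph. A permutation preserving the
adjacency matrix `A` commutes with `exp (i t A)`, so it permutes the entries of the column
`H(t) e_u` whenever it fixes `u`; if that column is `α e_u + β e_v` with `β ≠ 0`, the permutation
must therefore fix `v` as well. In `ℤ/4` negation fixes `0` but sends `1` to `3`.
-/

open Matrix

/-- The standard basis vector `e_u` in `ℂ^V`. -/
noncomputable def stdVec {V : Type*} (u : V) : V → ℂ :=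
  letI := Classical.decEq V
  Pi.single u 1

/-- The transition matrix `H(t) = exp(i t A)` of a graph with adjacency matrix `A`. -/
noncomputable def transMatrix {V : Type*} [Fintype V] (A : Matrix V V ℂ) (t : ℝ) :
    Matrix V V ℂ :=
  letI := Classical.decEq V
  NormedSpace.exp ((Complex.I * (t : ℂ)) • A)

/-- Quantum fractional revival from `u` to `v` at time `t`. -/
def hasQFR {V : Type*} [Fintype V] (A : Matrix V V ℂ) (u v : V) (t : ℝ) : Prop :=
  u ≠ v ∧ ∃ α β : ℂ, β ≠ 0 ∧
    (transMatrix A t) *ᵥ stdVec u = α • stdVec u + β • stdVec v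

/-- The unitary Cayley graph of a commutative ring: distinct `a, b` are adjacent
iff `a - b` is a unit. -/
def unitaryCayleyGraph (R : Type*) [CommRing R] : SimpleGraph R where
  Adj a b := a ≠ b ∧ IsUnit (a - b)
  symm := by
    refine ⟨?_⟩
    rintro a b ⟨h1, h2⟩
    refine ⟨h1.symm, ?_⟩
    rw [← neg_sub]
    exact h2.neg
  loopless := ⟨fun a h => h.1 rfl⟩

/-- The adjacency matrix (over `ℂ`) of the unitary Cayley graph of `R`. -/
noncomputable def ucMatrix (R : Type*) [CommRing R] : Matrix R R ℂ :=
  letI := Classical.decEq R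
  letI := Classical.decRel (unitaryCayleyGraph R).Adj
  (unitaryCayleyGraph R).adjMatrix ℂ

/-- The adjacency matrix (over `ℂ`) of a simple graph. -/
noncomputable def adjMat {V : Type*} (G : SimpleGraph V) : Matrix V V ℂ :=
  letI := Classical.decEq V
  letI := Classical.decRel G.Adj
  G.adjMatrix ℂ

namespace Matrix

open NormedSpace

variable {m n 𝔸 : Type*} [Fintype m] [DecidableEq m] [Fintype n] [DecidableEq n] [Ring 𝔸]
  [TopologicalSpace 𝔸] [IsTopologicalRing 𝔸] [T2Space 𝔸] [Algebra ℚ 𝔸]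

theorem exp_submatrix_equiv (e : m ≃ n) (A : Matrix n n 𝔸) :
    exp (A.submatrix e e) = (exp A).submatrix e e := by
  let r := reindexAlgEquiv ℚ 𝔸 e.symm
  have hr : Continuous r := continuous_id.matrix_reindex e.symm e.symm
  have hr' : Continuous r.symm := continuous_id.matrix_reindex e e
  change exp (r A) = r (exp A)
  simp_rw [exp_eq_tsum_rat, ← map_pow, ← map_smul]
  exact (Function.LeftInverse.map_tsum _ hr hr' r.left_inv).symm

end Matrix

theorem stdVec_self {V : Type*} (u : V) : stdVec u u = 1 := by
  classical
  exact Pi.single_eq_same u 1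

theorem stdVec_of_ne {V : Type*} {u w : V} (h : w ≠ u) : stdVec u w = 0 := by
  classical
  exact Pi.single_eq_of_ne h 1

theorem mulVec_stdVec {V : Type*} [Fintype V] (M : Matrix V V ℂ) (u : V) :
    M *ᵥ stdVec u = M.col u := by
  classical
  unfold stdVec
  convert M.mulVec_single_one u

theorem transMatrix_submatrix_of_submatrix_eq {V : Type*} [Fintype V] {A : Matrix V V ℂ}
    {e : V ≃ V} (hA : A.submatrix e e = A) (t : ℝ) :
    (transMatrix A t).submatrix e e = transMatrix A t := by
  classical
  unfold transMatrix
  rw [← Matrix.exp_submatrix_equiv]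
  exact congrArg (fun B => NormedSpace.exp ((Complex.I * (t : ℂ)) • B)) hA

theorem hasQFR.apply_eq_self_of_submatrix_eq {V : Type*} [Fintype V] {A : Matrix V V ℂ}
    {u v : V} {t : ℝ} (h : hasQFR A u v t) {e : V ≃ V} (hA : A.submatrix e e = A)
    (hu : e u = u) : e v = v := by
  obtain ⟨huv, α, β, hβ, hH⟩ := h
  have hcol : ∀ w, transMatrix A t w u = α * stdVec u w + β * stdVec v w := fun w => by
    simpa [mulVec_stdVec] using congrFun hH w
  by_contra hv
  have hvu : e v ≠ u := fun h => huv (e.injective (h.trans hu.symm)).symm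
  have hβv : transMatrix A t v u = β := by
    rw [hcol, stdVec_of_ne huv.symm, stdVec_self]
    ring
  have hβev : transMatrix A t (e v) u = 0 := by
    rw [hcol, stdVec_of_ne hvu, stdVec_of_ne hv]
    ring
  apply hβ
  calc β = transMatrix A t v u := hβv.symm
    _ = transMatrix A t (e v) (e u) :=
      (congrFun₂ (transMatrix_submatrix_of_submatrix_eq hA t) v u).symm
    _ = 0 := by rw [hu, hβev]

def unitaryCayleyGraph.negIso (R : Type*) [CommRing R] :
    unitaryCayleyGraph R ≃g unitaryCayleyGraph R where
  toEquiv := Equiv.neg R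
  map_rel_iff' {a b} := by
    simp only [unitaryCayleyGraph, Equiv.neg_apply, ne_eq, neg_inj, neg_sub_neg, ← neg_sub a b,
      IsUnit.neg_iff]

theorem ucMatrix_submatrix_neg (R : Type*) [CommRing R] :
    (ucMatrix R).submatrix (Equiv.neg R) (Equiv.neg R) = ucMatrix R := by
  classical
  exact (unitaryCayleyGraph.negIso R).toEmbedding.submatrix_adjMatrix ℂ

/-- the unitary Cayley graph of `ℤ/4` has no QFR from `0` to `1`
at any time. -/
theorem no_qfr_zmod_four_adjacent (t : ℝ) :
    ¬ hasQFR (ucMatrix (ZMod 4)) (0 : ZMod 4) (1 : ZMod 4) t := fun h =>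
  absurd (h.apply_eq_self_of_submatrix_eq (ucMatrix_submatrix_neg _) neg_zero)
    (by decide : (-1 : ZMod 4) ≠ 1)
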